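/- arXiv:2401.13752 — 3 statements merged into one kernel-verified Lean document; each statement's English description precedes it below -/
import Mathlib

section
/- In the recursive causal model M with three binary endogenous variables A, B, C, structural equations A = B and C = A ∨ (¬A ∧ B), and B set directly by the exogenous context, let u⃗ be the context in which all variables take value 1. Then A=1 does not satisfy SC2 for C=1 in (M,u⃗): A=1 by itself is not an actual cause of C=1, B=1 is an actual cause of C=1 in (M,u⃗), and there is no conjunction Y⃗=y⃗ such that A=1 ∧ Y⃗=y⃗ is an actual cause of C=1 in (M,u⃗). -/
open Classical

/-- A recursive causal model: `C` is the type of contexts (settings of the exogenous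
variables), `V` the type of endogenous variables, `Val` the type of values.
`F X c g` is the structural equation for `X`, given the context `c` and the values `g`
of the other endogenous variables.  Recursiveness (acyclicity) is captured by the
requirement that under every intervention (a partial assignment `I` of values to
endogenous variables, whose equations are replaced by the given constants) and every
context there is a unique solution of the equations. -/
structure CausalModel (C V Val : Type) where
  F : V → C → (V → Val) → Val
  unique_sol : ∀ (I : V → Option Val) (c : C),
    ∃! g : V → Val, ∀ X : V, g X = (I X).getD (F X c g)

namespace CausalModel

variable {C V Val : Type}

/-- The unique solution of the model under intervention `I` in context `c`. -/
noncomputable def sol (M : CausalModel C V Val) (I : V → Option Val) (c : C) : V → Val :=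
  (M.unique_sol I c).choose

/-- The actual values of the endogenous variables in context `c` (no intervention). -/
noncomputable def actVal (M : CausalModel C V Val) (c : C) : V → Val :=
  M.sol (fun _ => none) c

/-- The intervention `A ← x` setting the variables in `A` to the values given by `x`. -/
def interv [DecidableEq V] (A : Finset V) (x : V → Val) : V → Option Val :=
  fun X => if X ∈ A then some (x X) else none

/-- AC2 for the set `A` with the fixed alternative setting `x'`: there are a set `W` of
endogenous variables disjoint from `A` and values `w` that the variables in `W` take in
the actual setting such that `(M,c) ⊨ [A ← x', W ← w] ¬φ`. -/
def AC2At [DecidableEq V] (M : CausalModel C V Val) (c : C)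
    (A : Finset V) (x' : V → Val) (φ : (V → Val) → Prop) : Prop :=
  ∃ (W : Finset V) (w : V → Val),
    Disjoint A W ∧ (∀ Z ∈ W, M.actVal c Z = w Z) ∧
    ¬ φ (M.sol (interv (A ∪ W) (fun Z => if Z ∈ A then x' Z else w Z)) c)

/-- `A = x` is an actual cause of `φ` in `(M,c)`: AC1, AC2 and AC3 (minimality of `A`
with respect to the witnessing setting `x'`). -/
def IsActualCause [DecidableEq V] (M : CausalModel C V Val) (c : C)
    (A : Finset V) (x : V → Val) (φ : (V → Val) → Prop) : Prop :=
  (∀ X ∈ A, M.actVal c X = x X) ∧ φ (M.actVal c) ∧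
  ∃ x' : V → Val, AC2At M c A x' φ ∧ ∀ B : Finset V, B ⊂ A → ¬ AC2At M c B x' φ

/-- A but-for cause: an actual cause for which AC2 is witnessed with `W = ∅`. -/
def IsButForCause [DecidableEq V] (M : CausalModel C V Val) (c : C)
    (A : Finset V) (x : V → Val) (φ : (V → Val) → Prop) : Prop :=
  (∀ X ∈ A, M.actVal c X = x X) ∧ φ (M.actVal c) ∧
  ∃ x' : V → Val, ¬ φ (M.sol (interv A x') c) ∧
    ∀ B : Finset V, B ⊂ A → ¬ AC2At M c B x' φ

/-- SC1: `(M,c) ⊨ (A = x) ∧ φ`.  (This is also the satisfaction of `A = x ∧ φ`.) -/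
def SC1 (M : CausalModel C V Val) (c : C) (A : Finset V) (x : V → Val)
    (φ : (V → Val) → Prop) : Prop :=
  (∀ X ∈ A, M.actVal c X = x X) ∧ φ (M.actVal c)

/-- SC2: some conjunct `X = x X` of `A = x` is part of an actual cause of `φ` in `(M,c)`:
there is a (possibly empty) conjunction `Y = y` such that `X = x X ∧ Y = y` is an actual
cause of `φ` in `(M,c)`. -/
def SC2 [DecidableEq V] (M : CausalModel C V Val) (c : C) (A : Finset V)
    (x : V → Val) (φ : (V → Val) → Prop) : Prop :=
  ∃ X ∈ A, ∃ (Y : Finset V) (y : V → Val), X ∉ Y ∧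
    IsActualCause M c (insert X Y) (Function.update y X (x X)) φ

/-- SC3: `(M,c') ⊨ [A ← x] φ` for all contexts `c'`. -/
def SC3 [DecidableEq V] (M : CausalModel C V Val) (A : Finset V) (x : V → Val)
    (φ : (V → Val) → Prop) : Prop :=
  ∀ c' : C, φ (M.sol (interv A x) c')

/-- SC4: minimality; no strict subset of `A` (with `x` restricted) satisfies SC1, SC2
and SC3. -/
def SC4 [DecidableEq V] (M : CausalModel C V Val) (c : C) (A : Finset V)
    (x : V → Val) (φ : (V → Val) → Prop) : Prop :=
  ∀ B : Finset V, B ⊂ A → ¬ (SC1 M c B x φ ∧ SC2 M c B x φ ∧ SC3 M B x φ)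

/-- `A = x` is a sufficient cause of `φ` in `(M,c)`. -/
def IsSufficientCause [DecidableEq V] (M : CausalModel C V Val) (c : C)
    (A : Finset V) (x : V → Val) (φ : (V → Val) → Prop) : Prop :=
  SC1 M c A x φ ∧ SC2 M c A x φ ∧ SC3 M A x φ ∧ SC4 M c A x φ

/-- EX1 relative to a set `K` of contexts: in every context of `K` satisfying
`(A = x) ∧ φ` some conjunct of `A = x` is part of an actual cause of `φ` (SC2), and
`(M,c') ⊨ [A ← x] φ` for all `c' ∈ K`. -/
def EX1 [DecidableEq V] (M : CausalModel C V Val) (K : Set C) (A : Finset V)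
    (x : V → Val) (φ : (V → Val) → Prop) : Prop :=
  (∀ c ∈ K, SC1 M c A x φ → SC2 M c A x φ) ∧
  (∀ c ∈ K, φ (M.sol (interv A x) c))

/-- `A = x` is an explanation of `φ` relative to the set `K` of contexts: EX1,
EX2 (minimality) and EX3 (`(M,c) ⊨ (A = x) ∧ φ` for some `c ∈ K`). -/
def IsExplanation [DecidableEq V] (M : CausalModel C V Val) (K : Set C)
    (A : Finset V) (x : V → Val) (φ : (V → Val) → Prop) : Prop :=
  EX1 M K A x φ ∧
  (∀ B : Finset V, B ⊂ A → ¬ EX1 M K B x φ) ∧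
  (∃ c ∈ K, SC1 M c A x φ)

end CausalModel

open CausalModel


section Aux

variable {M : CausalModel Bool (Fin 3) Bool}

lemma sol_fix (I : Fin 3 → Option Bool) (c : Bool) :
    ∀ X, M.sol I c X = (I X).getD (M.F X c (M.sol I c)) :=
  (M.unique_sol I c).choose_spec.1

lemma sol1 (hB : ∀ (c : Bool) (g : Fin 3 → Bool), M.F 1 c g = c)
    (I : Fin 3 → Option Bool) (c : Bool) :
    M.sol I c 1 = (I 1).getD c := by
  have := sol_fix (M := M) I c 1; rwa [hB] at this

lemma sol0 (hA : ∀ (c : Bool) (g : Fin 3 → Bool), M.F 0 c g = g 1)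
    (I : Fin 3 → Option Bool) (c : Bool) :
    M.sol I c 0 = (I 0).getD (M.sol I c 1) := by
  have := sol_fix (M := M) I c 0; rwa [hA] at this

lemma sol2 (hC : ∀ (c : Bool) (g : Fin 3 → Bool), M.F 2 c g = (g 0 || (!(g 0) && g 1)))
    (I : Fin 3 → Option Bool) (c : Bool) :
    M.sol I c 2 = (I 2).getD (M.sol I c 0 || (!(M.sol I c 0) && M.sol I c 1)) := by
  have := sol_fix (M := M) I c 2; rwa [hC] at this

/-- If neither `B` nor `C` is intervened on to be `false`, then `C = true` in context
`true`. -/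
lemma sol2_true (hB : ∀ (c : Bool) (g : Fin 3 → Bool), M.F 1 c g = c)
    (hC : ∀ (c : Bool) (g : Fin 3 → Bool), M.F 2 c g = (g 0 || (!(g 0) && g 1)))
    (I : Fin 3 → Option Bool)
    (h1 : I 1 = none ∨ I 1 = some true) (h2 : I 2 = none ∨ I 2 = some true) :
    M.sol I true 2 = true := by
  have hb : M.sol I true 1 = true := by
    rcases h1 with h | h <;> rw [sol1 hB, h] <;> rfl
  rcases h2 with h | h
  · rw [sol2 hC, h, Option.getD_none, hb]
    cases M.sol I true 0 <;> rfl
  · rw [sol2 hC, h]; rfl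

lemma actVal_true (hA : ∀ (c : Bool) (g : Fin 3 → Bool), M.F 0 c g = g 1)
    (hB : ∀ (c : Bool) (g : Fin 3 → Bool), M.F 1 c g = c)
    (hC : ∀ (c : Bool) (g : Fin 3 → Bool), M.F 2 c g = (g 0 || (!(g 0) && g 1))) :
    ∀ X, M.actVal true X = true := by
  intro X
  have hb : M.actVal true 1 = true := by
    rw [actVal, sol1 hB]; rfl
  have ha : M.actVal true 0 = true := by
    rw [actVal, sol0 hA]; exact hb
  have hc : M.actVal true 2 = true := sol2_true hB hC _ (Or.inl rfl) (Or.inl rfl)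
  fin_cases X <;> assumption

/-- If `B ← false` and `A, C` are untouched, then `C = false`. -/
lemma sol2_false (hA : ∀ (c : Bool) (g : Fin 3 → Bool), M.F 0 c g = g 1)
    (hB : ∀ (c : Bool) (g : Fin 3 → Bool), M.F 1 c g = c)
    (hC : ∀ (c : Bool) (g : Fin 3 → Bool), M.F 2 c g = (g 0 || (!(g 0) && g 1)))
    (I : Fin 3 → Option Bool)
    (h0 : I 0 = none) (h1 : I 1 = some false) (h2 : I 2 = none) :
    M.sol I true 2 = false := by
  have hb : M.sol I true 1 = false := by rw [sol1 hB, h1]; rfl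
  have ha : M.sol I true 0 = false := by rw [sol0 hA, h0, Option.getD_none, hb]
  rw [sol2 hC, h2, Option.getD_none, ha, hb]; rfl

end Aux

/-- In the recursive causal model with three binary endogenous variables `A = 0`,
`B = 1`, `C = 2` (values in `Bool`, with `true` playing the role of `1`), one exogenous
variable (so a context is just a `Bool`), structural equations `A = B`,
`C = A ∨ (¬A ∧ B)`, and `B` set directly by the exogenous context, in the context
`c = true` (in which all variables take value 1), `A = 1` does not satisfy SC2 for
`C = 1`: `A = 1` by itself is not an actual cause of `C = 1`, `B = 1` is an actual cause
of `C = 1`, and there is no conjunction `Y = y` such that `A = 1 ∧ Y = y` is an actual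
cause of `C = 1` in `(M, c)` (which is exactly the failure of SC2 for `A = 1`). -/

theorem example_suffic_not_SC2 (M : CausalModel Bool (Fin 3) Bool)
    (hA : ∀ (c : Bool) (g : Fin 3 → Bool), M.F 0 c g = g 1)
    (hB : ∀ (c : Bool) (g : Fin 3 → Bool), M.F 1 c g = c)
    (hC : ∀ (c : Bool) (g : Fin 3 → Bool), M.F 2 c g = (g 0 || (!(g 0) && g 1))) :
    ¬ IsActualCause M true {0} (fun _ => true) (fun g => g 2 = true) ∧
    IsActualCause M true {1} (fun _ => true) (fun g => g 2 = true) ∧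
    (¬ ∃ (Y : Finset (Fin 3)) (y : Fin 3 → Bool), (0 : Fin 3) ∉ Y ∧
        IsActualCause M true (insert 0 Y) (Function.update y 0 true)
          (fun g => g 2 = true)) ∧
    ¬ SC2 M true {0} (fun _ => true) (fun g => g 2 = true) := by
  have hact := actVal_true hA hB hC
  -- Claim 1: A = 1 alone is not an actual cause of C = 1.
  have claim1 : ¬ IsActualCause M true {0} (fun _ => true) (fun g => g 2 = true) := by
    rintro ⟨-, -, x', ⟨W, w, hdisj, hw, hnφ⟩, -⟩
    apply hnφ
    show M.sol _ true 2 = true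
    apply sol2_true hB hC
    · by_cases h1 : (1 : Fin 3) ∈ W
      · right
        have hw1 : w 1 = true := by rw [← hw 1 h1]; exact hact 1
        simp [interv, h1, hw1]
      · left
        simp [interv, h1, show (1 : Fin 3) ≠ 0 by decide]
    · by_cases h2 : (2 : Fin 3) ∈ W
      · right
        have hw2 : w 2 = true := by rw [← hw 2 h2]; exact hact 2
        simp [interv, h2, hw2]
      · left
        simp [interv, h2, show (2 : Fin 3) ≠ 0 by decide]
  -- Claim 2: B = 1 is an actual cause of C = 1.
  have claim2 : IsActualCause M true {1} (fun _ => true) (fun g => g 2 = true) := by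
    refine ⟨fun X _ => hact X, hact 2, fun _ => false,
      ⟨∅, M.actVal true, Finset.disjoint_empty_right _, by simp, ?_⟩, ?_⟩
    · show ¬ M.sol _ true 2 = true
      rw [sol2_false hA hB hC _ (by simp [interv]) (by simp [interv]) (by simp [interv])]
      simp
    · intro B hB'
      have hBe : B = ∅ := by
        rcases Finset.eq_empty_or_nonempty B with h | h
        · exact h
        · exact absurd (Finset.eq_singleton_iff_nonempty_unique_mem.mpr
            ⟨h, fun x hx => Finset.mem_singleton.mp (hB'.1 hx)⟩ ▸ hB') (by simp)
      subst hBe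
      rintro ⟨W, w, hd, hw, hnφ⟩
      apply hnφ
      show M.sol _ true 2 = true
      apply sol2_true hB hC
      · by_cases h1 : (1 : Fin 3) ∈ W
        · right
          have hw1 : w 1 = true := by rw [← hw 1 h1]; exact hact 1
          simp [interv, h1, hw1]
        · left; simp [interv, h1]
      · by_cases h2 : (2 : Fin 3) ∈ W
        · right
          have hw2 : w 2 = true := by rw [← hw 2 h2]; exact hact 2
          simp [interv, h2, hw2]
        · left; simp [interv, h2]
  -- Claim 3: no conjunction A = 1 ∧ Y = y is an actual cause of C = 1.
  have claim3 : ¬ ∃ (Y : Finset (Fin 3)) (y : Fin 3 → Bool), (0 : Fin 3) ∉ Y ∧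
      IsActualCause M true (insert 0 Y) (Function.update y 0 true)
        (fun g => g 2 = true) := by
    rintro ⟨Y, y, h0Y, -, -, x', ⟨W, w, hdisj, hw, hnφ⟩, hmin⟩
    replace hnφ : ¬ M.sol (interv (insert 0 Y ∪ W)
        (fun Z => if Z ∈ insert 0 Y then x' Z else w Z)) true 2 = true := hnφ
    set I := interv (insert 0 Y ∪ W) (fun Z => if Z ∈ insert 0 Y then x' Z else w Z)
      with hIdef
    by_cases h2A : (2 : Fin 3) ∈ insert 0 Y
    · -- 2 is intervened on to x' 2; then x' 2 = false and {2} already satisfies AC2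
      have h2Y : (2 : Fin 3) ∈ Y := by
        rcases Finset.mem_insert.mp h2A with h | h
        · exact absurd h (by decide)
        · exact h
      have hI2 : I 2 = some (x' 2) := by
        simp only [hIdef, interv]
        rw [if_pos (Finset.mem_union_left W h2A), if_pos h2A]
      have hx2 : x' 2 = false := by
        have hs : M.sol I true 2 = x' 2 := by rw [sol2 hC, hI2]; rfl
        cases hx : x' 2
        · rfl
        · exact absurd (hs.trans hx) hnφ
      have hsub : ({2} : Finset (Fin 3)) ⊂ insert 0 Y := by
        rw [Finset.ssubset_def]
        refine ⟨Finset.singleton_subset_iff.mpr (Finset.mem_insert_of_mem h2Y), ?_⟩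
        intro h
        exact absurd (h (Finset.mem_insert_self 0 Y)) (by decide)
      refine hmin {2} hsub ⟨∅, M.actVal true, Finset.disjoint_empty_right _, by simp, ?_⟩
      show ¬ M.sol _ true 2 = true
      rw [sol2 hC]
      simp [interv, hx2]
    · by_cases h2W : (2 : Fin 3) ∈ W
      · -- 2 is held at its actual value true: C = 1, contradiction
        apply hnφ
        have hw2 : w 2 = true := by rw [← hw 2 h2W]; exact hact 2
        have hI2 : I 2 = some true := by
          simp only [hIdef, interv]
          rw [if_pos (Finset.mem_union_right _ h2W), if_neg h2A, hw2]
        rw [sol2 hC, hI2]; rfl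
      · -- 2 is not intervened on; then B must be set to false, so {1} satisfies AC2
        have hI2 : I 2 = none := by
          simp only [hIdef, interv]
          rw [if_neg (fun h => (Finset.mem_union.mp h).elim h2A h2W)]
        have hs1 : M.sol I true 1 = false := by
          cases hb1 : M.sol I true 1
          · rfl
          · exfalso
            apply hnφ
            rw [sol2 hC, hI2, Option.getD_none, hb1]
            cases M.sol I true 0 <;> rfl
        by_cases h1A : (1 : Fin 3) ∈ insert 0 Y
        · have h1Y : (1 : Fin 3) ∈ Y := by
            rcases Finset.mem_insert.mp h1A with h | h
            · exact absurd h (by decide)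
            · exact h
          have hI1 : I 1 = some (x' 1) := by
            simp only [hIdef, interv]
            rw [if_pos (Finset.mem_union_left W h1A), if_pos h1A]
          have hx1 : x' 1 = false := by
            have hs : M.sol I true 1 = x' 1 := by rw [sol1 hB, hI1]; rfl
            rw [hs] at hs1; exact hs1
          have hsub : ({1} : Finset (Fin 3)) ⊂ insert 0 Y := by
            rw [Finset.ssubset_def]
            refine ⟨Finset.singleton_subset_iff.mpr (Finset.mem_insert_of_mem h1Y), ?_⟩
            intro h
            exact absurd (h (Finset.mem_insert_self 0 Y)) (by decide)
          refine hmin {1} hsub ⟨∅, M.actVal true, Finset.disjoint_empty_right _, by simp, ?_⟩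
          show ¬ M.sol _ true 2 = true
          rw [sol2_false hA hB hC _ (by simp [interv]) (by simp [interv, hx1])
            (by simp [interv])]
          simp
        · by_cases h1W : (1 : Fin 3) ∈ W
          · have hw1 : w 1 = true := by rw [← hw 1 h1W]; exact hact 1
            have hI1 : I 1 = some true := by
              simp only [hIdef, interv]
              rw [if_pos (Finset.mem_union_right _ h1W), if_neg h1A, hw1]
            rw [sol1 hB, hI1] at hs1
            simp at hs1
          · have hI1 : I 1 = none := by
              simp only [hIdef, interv]
              rw [if_neg (fun h => (Finset.mem_union.mp h).elim h1A h1W)]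
            rw [sol1 hB, hI1] at hs1
            simp at hs1
  -- Claim 4: SC2 fails, which is exactly Claim 3.
  have claim4 : ¬ SC2 M true {0} (fun _ => true) (fun g => g 2 = true) := by
    rintro ⟨X, hX, Y, y, hXY, hcause⟩
    have hX0 : X = 0 := Finset.mem_singleton.mp hX
    subst hX0
    exact claim3 ⟨Y, y, hXY, hcause⟩
  exact ⟨claim1, claim2, claim3, claim4⟩
end

section
/- In the forest-fire causal model M with binary endogenous variables ML₁, ML₂, ML₃ (set directly by the context) and FB, where FB = 1 iff at least one of ML₁, ML₂, ML₃ equals 1 in contexts u₁ and u₂, and FB = 1 iff at least two of them equal 1 in context u₃, and where in u₁ exactly ML₁ and ML₂ equal 1 and in u₂ all three equal 1: (i) ML₁=1 ∧ ML₂=1 is an actual cause of FB=1 in (M,u₁); and (ii) ML₁=1 ∧ ML₂=1 ∧ ML₃=1 is an actual cause of FB=1 in (M,u₂). -/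
open Classical

open CausalModel

section Aux

variable {C V Val : Type}

lemma sol_spec' (M : CausalModel C V Val) (I : V → Option Val) (c : C) :
    ∀ X, M.sol I c X = (I X).getD (M.F X c (M.sol I c)) :=
  (M.unique_sol I c).choose_spec.1

lemma sol_eq' (M : CausalModel C V Val) (I : V → Option Val) (c : C)
    (g : V → Val) (h : ∀ X, g X = (I X).getD (M.F X c g)) : M.sol I c = g :=
  ((M.unique_sol I c).choose_spec.2 g h).symm

/-- Key lemma: under an intervention on `B ∪ W` where `W` gets the actual values,
if some match variable `i ∉ B` is actually lit and forced `true` by its equation,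
then the fire burns. -/
lemma ff_key {M : CausalModel (Fin 3) (Fin 4) Bool} {c : Fin 3}
    (hFBc : ∀ g : Fin 4 → Bool, M.F 3 c g = (g 0 || g 1 || g 2))
    {B W : Finset (Fin 4)} {x' w : Fin 4 → Bool} {i : Fin 4}
    (hi : i = 0 ∨ i = 1 ∨ i = 2) (hiB : i ∉ B) (h3B : (3 : Fin 4) ∉ B)
    (hw : ∀ Z ∈ W, M.actVal c Z = w Z)
    (hacti : M.actVal c i = true) (hact3 : M.actVal c 3 = true)
    (hFi : ∀ g, M.F i c g = true) :
    M.sol (interv (B ∪ W) (fun Z => if Z ∈ B then x' Z else w Z)) c 3 = true := by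
  set g := M.sol (interv (B ∪ W) (fun Z => if Z ∈ B then x' Z else w Z)) c with hgdef
  have hg := sol_spec' M (interv (B ∪ W) (fun Z => if Z ∈ B then x' Z else w Z)) c
  have hgi : g i = true := by
    have := hg i
    by_cases hiW : i ∈ W
    · simpa [interv, hiB, hiW, (hw i hiW).symm, hacti] using this
    · simpa [interv, hiB, hiW, hFi] using this
  have h3 := hg 3
  by_cases h3W : (3 : Fin 4) ∈ W
  · simpa [interv, h3B, h3W, (hw 3 h3W).symm, hact3] using h3
  · rw [show interv (B ∪ W) (fun Z => if Z ∈ B then x' Z else w Z) 3 = none by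
          simp [interv, h3B, h3W]] at h3
    simp only [Option.getD_none, hFBc] at h3
    rw [← hgdef] at h3
    rcases hi with rfl | rfl | rfl <;> simp [h3, hgi]

end Aux

/-- The forest-fire model: endogenous variables `ML₁ = 0`, `ML₂ = 1`, `ML₃ = 2`,
`FB = 3` with values in `Bool` (`true` playing the role of `1`), contexts
`u₁ = 0, u₂ = 1, u₃ = 2 : Fin 3`.  The match variables are set directly by the context
(in `u₁` exactly `ML₁, ML₂` are `1`; in `u₂` all three are `1`; in `u₃` exactly
`ML₁, ML₃` are `1`), and `FB = 1` iff at least one match is dropped in `u₁, u₂`, and iff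
at least two matches are dropped in `u₃`.  Then: (i) `ML₁ = 1 ∧ ML₂ = 1` is an actual
cause of `FB = 1` in `(M,u₁)`; and (ii) `ML₁ = 1 ∧ ML₂ = 1 ∧ ML₃ = 1` is an actual cause
of `FB = 1` in `(M,u₂)`. -/
theorem forestFire_actual_cause (M : CausalModel (Fin 3) (Fin 4) Bool)
    (hML1 : ∀ (c : Fin 3) (g : Fin 4 → Bool), M.F 0 c g = true)
    (hML2 : ∀ (c : Fin 3) (g : Fin 4 → Bool), M.F 1 c g = (if c = 2 then false else true))
    (hML3 : ∀ (c : Fin 3) (g : Fin 4 → Bool), M.F 2 c g = (if c = 0 then false else true))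
    (hFB : ∀ (c : Fin 3) (g : Fin 4 → Bool), M.F 3 c g =
      (if c = 2 then ((g 0 && g 1) || (g 0 && g 2) || (g 1 && g 2))
       else (g 0 || g 1 || g 2))) :
    IsActualCause M 0 {0, 1} (fun _ => true) (fun g => g 3 = true) ∧
    IsActualCause M 1 {0, 1, 2} (fun _ => true) (fun g => g 3 = true) := by
  have hFB0 : ∀ g : Fin 4 → Bool, M.F 3 0 g = (g 0 || g 1 || g 2) := by
    intro g; rw [hFB, if_neg (by decide)]
  have hFB1 : ∀ g : Fin 4 → Bool, M.F 3 1 g = (g 0 || g 1 || g 2) := by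
    intro g; rw [hFB, if_neg (by decide)]
  have hact0 : M.actVal 0 = ![true, true, false, true] := by
    apply sol_eq'
    intro X
    fin_cases X <;> simp [hML1, hML2, hML3, hFB0, hML3 0]
  have hact1 : M.actVal 1 = ![true, true, true, true] := by
    apply sol_eq'
    intro X
    fin_cases X <;> simp [hML1, hML2, hML3, hFB1]
  constructor
  · refine ⟨?_, ?_, fun _ => false, ⟨∅, fun _ => false, ?_, ?_, ?_⟩, ?_⟩
    · intro X hX; fin_cases hX <;> simp [hact0]
    · rw [hact0]; rfl
    · exact Finset.disjoint_empty_right _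
    · intro Z hZ; simp at hZ
    · have hs : M.sol (interv ({0, 1} ∪ ∅)
          (fun Z => if Z ∈ ({0, 1} : Finset (Fin 4)) then false else false)) 0
          = fun _ => false := by
        apply sol_eq'
        intro X
        fin_cases X <;> simp [interv, hML3, hFB0]
      rw [hs]; simp
    · intro B hB hAC2
      obtain ⟨W, w, hdisj, hw, hnφ⟩ := hAC2
      obtain ⟨i, hiA, hiB⟩ := Finset.exists_of_ssubset hB
      have h3B : (3 : Fin 4) ∉ B := fun h => by
        have := hB.subset h
        simp at this
      apply hnφ
      have hiA' : i = 0 ∨ i = 1 := by simpa using hiA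
      refine ff_key hFB0 (hiA'.imp id Or.inl) hiB h3B hw ?_ (by rw [hact0]; rfl) ?_
      · rcases hiA' with rfl | rfl <;> rw [hact0] <;> rfl
      · rcases hiA' with rfl | rfl
        · exact hML1 0
        · intro g; rw [hML2, if_neg (by decide)]
  · refine ⟨?_, ?_, fun _ => false, ⟨∅, fun _ => false, ?_, ?_, ?_⟩, ?_⟩
    · intro X hX; fin_cases hX <;> simp [hact1]
    · rw [hact1]; rfl
    · exact Finset.disjoint_empty_right _
    · intro Z hZ; simp at hZ
    · have hs : M.sol (interv ({0, 1, 2} ∪ ∅)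
          (fun Z => if Z ∈ ({0, 1, 2} : Finset (Fin 4)) then false else false)) 1
          = fun _ => false := by
        apply sol_eq'
        intro X
        fin_cases X <;> simp [interv, hFB1]
      rw [hs]; simp
    · intro B hB hAC2
      obtain ⟨W, w, hdisj, hw, hnφ⟩ := hAC2
      obtain ⟨i, hiA, hiB⟩ := Finset.exists_of_ssubset hB
      have h3B : (3 : Fin 4) ∉ B := fun h => by
        have := hB.subset h
        simp at this
      apply hnφ
      have hiA' : i = 0 ∨ i = 1 ∨ i = 2 := by simpa using hiA
      refine ff_key hFB1 hiA' hiB h3B hw ?_ (by rw [hact1]; rfl) ?_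
      · rcases hiA' with rfl | rfl | rfl <;> rw [hact1] <;> rfl
      · rcases hiA' with rfl | rfl | rfl
        · exact hML1 1
        · intro g; rw [hML2, if_neg (by decide)]
        · intro g; rw [hML3, if_neg (by decide)]
end

section
/- In the rock-throwing causal model M with binary endogenous variables ST and BT set directly by the exogenous context, and equations SH = ST, BH = BT ∧ ¬SH, and BS = SH ∨ BH, let u⃗ be the context in which both ST=1 and BT=1. Then: (i) ST=1 is an actual cause of BS=1 in (M,u⃗), witnessed by AC2 with W⃗ = {BH} held at its actual value 0; and (ii) ST=1 is not a but-for cause of BS=1 in (M,u⃗), since (M,u⃗) ⊨ [ST←0](BS=1). -/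
/-! Once `BH` is frozen at its actual value `0`, Billy's rock can no longer hit, so `BS` follows `ST`;
left free, `BH` becomes `1` as soon as `ST = 0`, so `BS = 1` survives every change of `ST` alone.
The minimality condition AC3 is immediate: the only strict subset of `{ST}` is `∅`, and intervening
on variables at their actual values changes nothing. -/

open Classical

open CausalModel

namespace CausalModel

variable {C V Val : Type} (M : CausalModel C V Val)

theorem sol_eq_of_forall_eq_getD {I : V → Option Val} {c : C} {g : V → Val}
    (h : ∀ X, g X = (I X).getD (M.F X c g)) : M.sol I c = g :=
  ((M.unique_sol I c).choose_spec.2 g h).symm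

theorem sol_apply (I : V → Option Val) (c : C) (X : V) :
    M.sol I c X = (I X).getD (M.F X c (M.sol I c)) :=
  (M.unique_sol I c).choose_spec.1 X

theorem actVal_apply (c : C) (X : V) : M.actVal c X = M.F X c (M.actVal c) :=
  M.sol_apply _ c X

variable [DecidableEq V]

theorem sol_interv_eq_actVal {c : C} {W : Finset V} {w : V → Val}
    (hw : ∀ Z ∈ W, M.actVal c Z = w Z) : M.sol (interv W w) c = M.actVal c := by
  refine M.sol_eq_of_forall_eq_getD fun X => ?_
  by_cases hX : X ∈ W
  · simp [interv, hX, hw X hX]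
  · simpa [interv, hX] using M.actVal_apply c X

theorem not_ac2At_empty {c : C} {x' : V → Val} {φ : (V → Val) → Prop}
    (hφ : φ (M.actVal c)) : ¬ AC2At M c ∅ x' φ := by
  rintro ⟨W, w, -, hw, hnot⟩
  simp only [Finset.empty_union, Finset.notMem_empty, if_false] at hnot
  exact hnot (M.sol_interv_eq_actVal hw ▸ hφ)

theorem isActualCause_singleton {c : C} {X : V} {x x' : V → Val} {φ : (V → Val) → Prop}
    (hX : M.actVal c X = x X) (hφ : φ (M.actVal c)) (hAC2 : AC2At M c {X} x' φ) :
    IsActualCause M c {X} x φ := by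
  refine ⟨by simpa using hX, hφ, x', hAC2, fun B hB => ?_⟩
  rw [Finset.ssubset_singleton_iff.mp hB]
  exact M.not_ac2At_empty hφ

theorem not_isButForCause_of_forall {c : C} {A : Finset V} {x : V → Val}
    {φ : (V → Val) → Prop} (h : ∀ x', φ (M.sol (interv A x') c)) :
    ¬ IsButForCause M c A x φ := by
  rintro ⟨-, -, x', hnot, -⟩
  exact hnot (h x')

end CausalModel

/-- `ST = 0`, `BT = 1`, `SH = 2`, `BH = 3`, `BS = 4`. -/
structure IsRockThrowing (M : CausalModel (Fin 2 → Bool) (Fin 5) Bool) : Prop where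
  eq_ST : ∀ c g, M.F 0 c g = c 0
  eq_BT : ∀ c g, M.F 1 c g = c 1
  eq_SH : ∀ c g, M.F 2 c g = g 0
  eq_BH : ∀ c g, M.F 3 c g = (g 1 && !(g 2))
  eq_BS : ∀ c g, M.F 4 c g = (g 2 || g 3)

namespace IsRockThrowing

variable {M : CausalModel (Fin 2 → Bool) (Fin 5) Bool}

theorem actVal_eq (hM : IsRockThrowing M) (c : Fin 2 → Bool) :
    M.actVal c = ![c 0, c 1, c 0, c 1 && !c 0, c 0 || (c 1 && !c 0)] := by
  refine M.sol_eq_of_forall_eq_getD fun X => ?_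
  fin_cases X <;> simp [hM.eq_ST, hM.eq_BT, hM.eq_SH, hM.eq_BH, hM.eq_BS]

theorem sol_interv_ST (hM : IsRockThrowing M) (x' : Fin 5 → Bool) (c : Fin 2 → Bool) :
    M.sol (interv {0} x') c = ![x' 0, c 1, x' 0, c 1 && !x' 0, x' 0 || (c 1 && !x' 0)] := by
  refine M.sol_eq_of_forall_eq_getD fun X => ?_
  fin_cases X <;> simp [interv, hM.eq_ST, hM.eq_BT, hM.eq_SH, hM.eq_BH, hM.eq_BS]

theorem sol_interv_ST_BH (hM : IsRockThrowing M) (x' : Fin 5 → Bool) (c : Fin 2 → Bool) :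
    M.sol (interv {0, 3} x') c = ![x' 0, c 1, x' 0, x' 3, x' 0 || x' 3] := by
  refine M.sol_eq_of_forall_eq_getD fun X => ?_
  fin_cases X <;> simp [interv, hM.eq_ST, hM.eq_BT, hM.eq_SH, hM.eq_BH, hM.eq_BS]

end IsRockThrowing

/-- The rock-throwing model: binary endogenous variables `ST = 0`, `BT = 1` set directly
by the exogenous context `c : Fin 2 → Bool`, and `SH = 2`, `BH = 3`, `BS = 4` with
equations `SH = ST`, `BH = BT ∧ ¬SH`, `BS = SH ∨ BH` (`true` playing the role of `1`).
In the context where both `ST = 1` and `BT = 1`: (i) `ST = 1` is an actual cause of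
`BS = 1`, witnessed by AC2 with `W = {BH}` held at its actual value `0` (indeed `BH`
actually takes value `0` and `(M,c) ⊨ [ST ← 0, BH ← 0]¬(BS = 1)`); and (ii) `ST = 1` is
not a but-for cause of `BS = 1`, since `(M,c) ⊨ [ST ← 0](BS = 1)`. -/
theorem rockThrowing_actual_cause (M : CausalModel (Fin 2 → Bool) (Fin 5) Bool)
    (hST : ∀ (c : Fin 2 → Bool) (g : Fin 5 → Bool), M.F 0 c g = c 0)
    (hBT : ∀ (c : Fin 2 → Bool) (g : Fin 5 → Bool), M.F 1 c g = c 1)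
    (hSH : ∀ (c : Fin 2 → Bool) (g : Fin 5 → Bool), M.F 2 c g = g 0)
    (hBH : ∀ (c : Fin 2 → Bool) (g : Fin 5 → Bool), M.F 3 c g = (g 1 && !(g 2)))
    (hBS : ∀ (c : Fin 2 → Bool) (g : Fin 5 → Bool), M.F 4 c g = (g 2 || g 3)) :
    (IsActualCause M (fun _ => true) {0} (fun _ => true) (fun g => g 4 = true) ∧
     M.actVal (fun _ => true) 3 = false ∧
     ¬ (M.sol (interv {0, 3} (fun _ => false)) (fun _ => true) 4 = true)) ∧
    (¬ IsButForCause M (fun _ => true) {0} (fun _ => true) (fun g => g 4 = true) ∧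
     M.sol (interv {0} (fun _ => false)) (fun _ => true) 4 = true) := by
  have hM : IsRockThrowing M := ⟨hST, hBT, hSH, hBH, hBS⟩
  have hBH_actual : M.actVal (fun _ => true) 3 = false := by simp [hM.actVal_eq]
  have hBS_not_of_ST_BH : ¬ M.sol (interv {0, 3} (fun _ => false)) (fun _ => true) 4 = true := by
    simp [hM.sol_interv_ST_BH]
  have hBS_of_ST : ∀ x', M.sol (interv {0} x') (fun _ => true) 4 = true := fun x' => by
    simp [hM.sol_interv_ST]
  have hAC2 : AC2At M (fun _ => true) {0} (fun _ => false) (fun g => g 4 = true) := by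
    refine ⟨{3}, fun _ => false, by decide, by simpa using hBH_actual, ?_⟩
    simpa using hBS_not_of_ST_BH
  have hcause := M.isActualCause_singleton (x := fun _ => true)
    (by simp [hM.actVal_eq]) (by simp [hM.actVal_eq]) hAC2
  exact ⟨⟨hcause, hBH_actual, hBS_not_of_ST_BH⟩,
    M.not_isButForCause_of_forall hBS_of_ST, hBS_of_ST _⟩
end
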